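/- Let 1 ≤ q < ∞, α real with α ≠ −1 + 1/q, 0 < b ≤ ∞, g ∈ L^q(0,b). Let f ∈ W^{2,1}_loc(0,b) be a positive solution of f'' = g·f^α a.e. on (0,b), satisfying the boundary condition: with κ = −sign(α + 1 − 1/q), liminf_{R→b} κ|f'(R)|^{2q−2}f'(R) f(R)^{−q(α+1)+1} − limsup_{r→0} κ|f'(r)|^{2q−2}f'(r) f(r)^{−q(α+1)+1} ≤ 0. Then ∫_0^b |f'(x)|^{2q} f(x)^{−q(α+1)} dx ≤ ((2q−1)/|q−1+αq|)^q ∫_0^b |g(x)|^q dx. -/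

import Mathlib

/-!
Along a positive solution of `f'' = g f^α`, the flux `ψ = |f'|^(2q-2) f' f^(1-q(α+1))` satisfies
`ψ' = (2q-1) w g - (q-1+αq) E` with `w = |f'|^(2q-2) f^((α+1)(1-q))` and
`E = |f'|^(2q) f^(-q(α+1))`. Since `w^(q/(q-1)) = E`, Hölder's inequality bounds `∫_r^R w g` by
`I^(1-1/q) ‖g‖_q` with `I = ∫_0^b E`, so `κψ` changes on `[r, R]` by `|q-1+αq| ∫_r^R E` up to an
error of at most `(2q-1) I^(1-1/q) ‖g‖_q`. Letting `r → 0` and `R → b`, the boundary condition gives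
`|q-1+αq| I ≤ (2q-1) I^(1-1/q) ‖g‖_q`, which rearranges to the estimate.
-/

open MeasureTheory Set Filter Topology

theorem Real.sign_mul_self_eq_abs (x : ℝ) : Real.sign x * x = |x| := by
  rcases lt_trichotomy x 0 with hx | rfl | hx
  · rw [Real.sign_of_neg hx, abs_of_neg hx]; ring
  · simp
  · rw [Real.sign_of_pos hx, abs_of_pos hx]; ring

theorem Real.abs_sign_le_one (x : ℝ) : |Real.sign x| ≤ 1 := by
  rcases Real.sign_apply_eq x with h | h | h <;> simp [h]

theorem hasDerivAt_abs_rpow_mul_self {p : ℝ} (hp : 0 ≤ p) (t : ℝ) :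
    HasDerivAt (fun s => |s| ^ p * s) ((p + 1) * |t| ^ p) t := by
  rcases eq_or_ne t 0 with rfl | ht
  · rw [hasDerivAt_iff_tendsto_slope]
    have hcont : Tendsto (fun s : ℝ => |s| ^ p) (𝓝[≠] 0) (𝓝 (|0| ^ p)) :=
      ((continuous_abs.rpow_const fun _ => Or.inr hp).tendsto 0).mono_left nhdsWithin_le_nhds
    convert hcont.congr' ?_ using 2
    · rcases hp.eq_or_lt with rfl | hp
      · simp
      · simp [Real.zero_rpow hp.ne']
    · filter_upwards [self_mem_nhdsWithin] with s hs
      rw [slope_def_field, mul_zero, sub_zero, sub_zero, mul_div_cancel_right₀ _ hs]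
  · refine (((hasDerivAt_abs ht).rpow_const (p := p) (Or.inl (abs_ne_zero.mpr ht))).mul
      (hasDerivAt_id t)).congr_deriv ?_
    have h : |t| ^ (p - 1) * |t| = |t| ^ p := by
      rw [← Real.rpow_add_one (abs_ne_zero.mpr ht)]; ring_nf
    rw [id_eq, ← h, ← sign_mul_self t]
    ring

theorem abs_rpow_mul_self_mul_self {p : ℝ} (hp : p + 2 ≠ 0) (t : ℝ) :
    |t| ^ p * t * t = |t| ^ (p + 2) := by
  rcases eq_or_ne t 0 with rfl | ht
  · simp [Real.zero_rpow hp]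
  · rw [mul_assoc, ← abs_mul_abs_self, Real.rpow_add (abs_pos.mpr ht), Real.rpow_two, sq]

theorem ContinuousOn.abs_rpow_mul_rpow {s : Set ℝ} {u v : ℝ → ℝ} (hu : ContinuousOn u s)
    (hv : ContinuousOn v s) (hv₀ : ∀ x ∈ s, 0 < v x) {p : ℝ} (hp : 0 ≤ p) (e : ℝ) :
    ContinuousOn (fun x => |u x| ^ p * v x ^ e) s :=
  (hu.abs.rpow_const fun _ _ => Or.inr hp).mul (hv.rpow_const fun x hx => Or.inl (hv₀ x hx).ne')

theorem memLp_ofReal_of_integrable_abs_rpow {β : Type*} [MeasurableSpace β] {μ : Measure β}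
    {φ : β → ℝ} {p : ℝ} (hp : 0 < p) (hφ : AEStronglyMeasurable φ μ)
    (hint : Integrable (fun x => |φ x| ^ p) μ) : MemLp φ (ENNReal.ofReal p) μ :=
  (integrable_norm_rpow_iff hφ (by simpa using hp) ENNReal.ofReal_ne_top).mp <| by
    simpa [ENNReal.toReal_ofReal hp.le] using hint

theorem le_div_rpow_mul_of_mul_le_mul_rpow_mul_rpow {a k I G q : ℝ} (ha : 0 < a) (hk : 0 ≤ k)
    (hq : 0 < q) (hI : 0 ≤ I) (hG : 0 ≤ G) (h : a * I ≤ k * (I ^ (1 - 1 / q) * G ^ (1 / q))) :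
    I ≤ (k / a) ^ q * G := by
  rcases hI.eq_or_lt with rfl | hI
  · positivity
  have hsplit : I = I ^ (1 - 1 / q) * I ^ (1 / q) := by
    rw [← Real.rpow_add hI]; norm_num
  have hroot : a * I ^ (1 / q) ≤ k * G ^ (1 / q) := by
    refine le_of_mul_le_mul_left ?_ (Real.rpow_pos_of_pos hI (1 - 1 / q))
    calc I ^ (1 - 1 / q) * (a * I ^ (1 / q)) = a * (I ^ (1 - 1 / q) * I ^ (1 / q)) := by ring
      _ = a * I := by rw [← hsplit]
      _ ≤ _ := h
      _ = _ := by ring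
  have hpow := Real.rpow_le_rpow (by positivity) hroot hq.le
  rw [Real.mul_rpow ha.le (by positivity), Real.mul_rpow hk (by positivity), ← Real.rpow_mul hI.le,
    ← Real.rpow_mul hG, one_div_mul_cancel hq.ne', Real.rpow_one, Real.rpow_one] at hpow
  rw [Real.div_rpow hk ha.le, div_mul_eq_mul_div, le_div_iff₀ (by positivity)]
  linarith

/-- The upper bound `K` only makes `liminf` and `limsup`, junk on unbounded functions,
meaningful. -/
theorem le_liminf_sub_limsup_of_eventually_prod {β : Type*} {Φ : β → ℝ} {l₀ l₁ : Filter β}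
    [l₀.NeBot] [l₁.NeBot] {a K : ℝ}
    (h : ∀ᶠ p in l₀ ×ˢ l₁, a ≤ Φ p.2 - Φ p.1 ∧ Φ p.2 - Φ p.1 ≤ K) :
    a ≤ liminf Φ l₁ - limsup Φ l₀ := by
  obtain ⟨P₀, hP₀, P₁, hP₁, hP⟩ := eventually_prod_iff.mp h
  obtain ⟨r, hr⟩ := hP₀.exists
  obtain ⟨R, hR⟩ := hP₁.exists
  have hcob₁ : IsCoboundedUnder (· ≥ ·) l₁ Φ :=
    isCoboundedUnder_ge_of_eventually_le l₁ (x := Φ r + K) <|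
      hP₁.mono fun R' hR' => by linarith [(hP hr hR').2]
  have hcob₀ : IsCoboundedUnder (· ≤ ·) l₀ Φ :=
    isCoboundedUnder_le_of_eventually_le l₀ (x := Φ R - K) <|
      hP₀.mono fun r' hr' => by linarith [(hP hr' hR).2]
  have hlim : limsup Φ l₀ ≤ liminf Φ l₁ - a :=
    limsup_le_of_le hcob₀ <| hP₀.mono fun r' hr' => by
      have : Φ r' + a ≤ liminf Φ l₁ :=
        le_liminf_of_le hcob₁ <| hP₁.mono fun R' hR' => by linarith [(hP hr' hR').1]
      linarith
  linarith

theorem EReal.comap_coe_nhdsLT_neBot {b : EReal} (hb : ⊥ < b) :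
    (comap ((↑) : ℝ → EReal) (𝓝[<] b)).NeBot := by
  refine comap_neBot fun t ht => ?_
  obtain ⟨a, hab, hat⟩ := (mem_nhdsLT_iff_exists_Ioo_subset' hb).mp ht
  obtain ⟨x, hax, hxb⟩ := EReal.lt_iff_exists_real_btwn.mp hab
  exact ⟨x, hat ⟨hax, hxb⟩⟩

theorem EReal.eventually_comap_coe_nhdsLT {b : EReal} {x : ℝ} (hx : (x : EReal) < b) :
    ∀ᶠ R in comap ((↑) : ℝ → EReal) (𝓝[<] b), x < R ∧ (R : EReal) < b :=
  eventually_comap.mpr <| eventually_of_mem (Ioo_mem_nhdsLT hx) fun _ hy _ hR =>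
    ⟨EReal.coe_lt_coe_iff.mp (hR ▸ hy.1), hR ▸ hy.2⟩

theorem isOpen_setOf_lt_and_coe_lt (a : ℝ) (b : EReal) :
    IsOpen {x : ℝ | a < x ∧ (x : EReal) < b} :=
  isOpen_Ioi.inter (isOpen_Iio.preimage continuous_coe_real_ereal)

theorem tendsto_setIntegral_Ioo_of_integrableOn {a : ℝ} {b : EReal} {F : ℝ → ℝ}
    (hF : IntegrableOn F {x : ℝ | a < x ∧ (x : EReal) < b}) :
    Tendsto (fun p : ℝ × ℝ => ∫ x in Ioo p.1 p.2, F x)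
      (𝓝[>] a ×ˢ comap ((↑) : ℝ → EReal) (𝓝[<] b))
      (𝓝 (∫ x in {x : ℝ | a < x ∧ (x : EReal) < b}, F x)) := by
  set S := {x : ℝ | a < x ∧ (x : EReal) < b}
  have hmem : ∀ x ∈ S, ∀ᶠ p in 𝓝[>] a ×ˢ comap ((↑) : ℝ → EReal) (𝓝[<] b), x ∈ Ioo p.1 p.2 :=
    fun x hx => ((eventually_of_mem (Ioo_mem_nhdsGT hx.1) fun _ h => h).prod_mk
      (EReal.eventually_comap_coe_nhdsLT hx.2)).mono fun p hp => ⟨hp.1.2, hp.2.1⟩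
  have hcover : AECover (volume.restrict S) (𝓝[>] a ×ˢ comap ((↑) : ℝ → EReal) (𝓝[<] b))
      fun p => Ioo p.1 p.2 :=
    ⟨(ae_restrict_mem (isOpen_setOf_lt_and_coe_lt a b).measurableSet).mono hmem,
      fun _ => measurableSet_Ioo⟩
  refine (hcover.integral_tendsto_of_countably_generated hF).congr' ?_
  have hlt : ∀ᶠ R : ℝ in comap ((↑) : ℝ → EReal) (𝓝[<] b), (R : EReal) < b :=
    eventually_comap.mpr <| eventually_of_mem self_mem_nhdsWithin fun _ hy _ hR => hR ▸ hy
  filter_upwards [(eventually_of_mem self_mem_nhdsWithin fun _ h => h).prod_mk hlt] with p hp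
  have hsub : Ioo p.1 p.2 ⊆ S := fun x hx =>
    ⟨lt_trans hp.1 hx.1, (EReal.coe_lt_coe_iff.mpr hx.2).trans hp.2⟩
  rw [Measure.restrict_restrict measurableSet_Ioo, inter_eq_left.mpr hsub]

theorem mul_setIntegral_le_of_liminf_sub_limsup_nonpos {a : ℝ} {b : EReal} (hab : (a : EReal) < b)
    {F Φ : ℝ → ℝ} {k H : ℝ} (hk : 0 ≤ k) (hF : IntegrableOn F {x : ℝ | a < x ∧ (x : EReal) < b})
    (hF₀ : ∀ x ∈ {x : ℝ | a < x ∧ (x : EReal) < b}, 0 ≤ F x)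
    (hΦ : ∀ r R : ℝ, a < r → r ≤ R → (R : EReal) < b →
      |Φ R - Φ r - k * ∫ x in Ioo r R, F x| ≤ H)
    (hbdry : liminf Φ (comap ((↑) : ℝ → EReal) (𝓝[<] b)) - limsup Φ (𝓝[>] a) ≤ 0) :
    k * ∫ x in {x : ℝ | a < x ∧ (x : EReal) < b}, F x ≤ H := by
  set S := {x : ℝ | a < x ∧ (x : EReal) < b}
  have := EReal.comap_coe_nhdsLT_neBot ((EReal.bot_lt_coe a).trans hab)
  have hmono : ∀ {s t : Set ℝ}, s ⊆ t → t ⊆ S → MeasurableSet t →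
      k * ∫ x in s, F x ≤ k * ∫ x in t, F x := fun hst htS ht =>
    mul_le_mul_of_nonneg_left (setIntegral_mono_set (hF.mono_set htS)
      ((ae_restrict_mem ht).mono fun x hx => hF₀ x (htS hx)) hst.eventuallyLE) hk
  have hIooS : ∀ {r R : ℝ}, a < r → (R : EReal) < b → Ioo r R ⊆ S := fun hr hR x hx =>
    ⟨hr.trans hx.1, (EReal.coe_lt_coe_iff.mpr hx.2).trans hR⟩
  have hbound : ∀ r₀ R₀ : ℝ, a < r₀ → r₀ ≤ R₀ → (R₀ : EReal) < b →
      k * ∫ x in Ioo r₀ R₀, F x ≤ H := by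
    intro r₀ R₀ hr₀ hrR₀ hR₀
    suffices k * (∫ x in Ioo r₀ R₀, F x) - H ≤ liminf Φ (comap ((↑) : ℝ → EReal) (𝓝[<] b)) -
        limsup Φ (𝓝[>] a) by linarith
    refine le_liminf_sub_limsup_of_eventually_prod (K := k * (∫ x in S, F x) + H) ?_
    filter_upwards [(eventually_of_mem (Ioo_mem_nhdsGT hr₀) fun _ h => h).prod_mk
      (EReal.eventually_comap_coe_nhdsLT hR₀)] with p ⟨⟨hr, hrr₀⟩, hRR₀, hR⟩
    have hsub := hIooS hr hR
    have h₀ := hmono (Ioo_subset_Ioo hrr₀.le hRR₀.le) hsub measurableSet_Ioo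
    have h₁ := hmono hsub subset_rfl (isOpen_setOf_lt_and_coe_lt a b).measurableSet
    have h := abs_le.mp (hΦ p.1 p.2 hr (by linarith) hR)
    constructor <;> linarith [h.1, h.2]
  obtain ⟨m, ham, hmb⟩ := EReal.lt_iff_exists_real_btwn.mp hab
  have ham : a < m := EReal.coe_lt_coe_iff.mp ham
  refine le_of_tendsto ((tendsto_setIntegral_Ioo_of_integrableOn hF).const_mul k) ?_
  filter_upwards [(eventually_of_mem (Ioo_mem_nhdsGT ham) fun _ h => h).prod_mk
    (EReal.eventually_comap_coe_nhdsLT hmb)] with p ⟨⟨hr, hrm⟩, hmR, hR⟩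
  exact hbound p.1 p.2 hr (hrm.trans hmR).le hR

namespace EmdenFowler

noncomputable section

def energyDensity (q α : ℝ) (f : ℝ → ℝ) (x : ℝ) : ℝ :=
  |deriv f x| ^ (2 * q) * f x ^ (-(q * (α + 1)))

def flux (q α : ℝ) (f : ℝ → ℝ) (x : ℝ) : ℝ :=
  |deriv f x| ^ (2 * q - 2) * deriv f x * f x ^ (-(q * (α + 1)) + 1)

def fluxWeight (q α : ℝ) (f : ℝ → ℝ) (x : ℝ) : ℝ :=
  |deriv f x| ^ (2 * q - 2) * f x ^ ((α + 1) * (1 - q))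

end

variable {q α r R : ℝ} {f g : ℝ → ℝ}

theorem energyDensity_nonneg {x : ℝ} (hfx : 0 < f x) : 0 ≤ energyDensity q α f x :=
  mul_nonneg (by positivity) (Real.rpow_nonneg hfx.le _)

theorem hasDerivAt_flux (hq : 1 ≤ q) {x : ℝ} (hf : DifferentiableAt ℝ f x)
    (hf' : DifferentiableAt ℝ (deriv f) x) (hfx : 0 < f x) :
    HasDerivAt (flux q α f)
      ((2 * q - 1) * (|deriv f x| ^ (2 * q - 2) * f x ^ (-(q * (α + 1)) + 1)) *
          deriv (deriv f) x - (q - 1 + α * q) * energyDensity q α f x) x := by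
  have hW := (hasDerivAt_abs_rpow_mul_self (p := 2 * q - 2) (by linarith) _).comp x
    hf'.hasDerivAt
  refine (hW.mul (hf.hasDerivAt.rpow_const (p := -(q * (α + 1)) + 1)
    (Or.inl hfx.ne'))).congr_deriv ?_
  have h := abs_rpow_mul_self_mul_self (p := 2 * q - 2) (by linarith) (deriv f x)
  rw [show 2 * q - 2 + 2 = 2 * q by ring] at h
  simp only [energyDensity, Function.comp_apply,
    show -(q * (α + 1)) + 1 - 1 = -(q * (α + 1)) by ring]
  linear_combination (-(q * (α + 1)) + 1) * f x ^ (-(q * (α + 1))) * h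

theorem flux_sub_flux (hq : 1 ≤ q) (hrR : r ≤ R)
    (hf : ∀ x ∈ Icc r R, DifferentiableAt ℝ f x)
    (hf' : ∀ x ∈ Icc r R, DifferentiableAt ℝ (deriv f) x)
    (hf'' : IntegrableOn (deriv (deriv f)) (Icc r R)) (hpos : ∀ x ∈ Icc r R, 0 < f x)
    (hode : ∀ᵐ x, x ∈ Ioo r R → deriv (deriv f) x = g x * f x ^ α) :
    flux q α f R - flux q α f r =
      (2 * q - 1) * (∫ x in Ioo r R, fluxWeight q α f x * g x) -
        (q - 1 + α * q) * ∫ x in Ioo r R, energyDensity q α f x := by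
  have hfc : ContinuousOn f (Icc r R) := fun x hx => (hf x hx).continuousAt.continuousWithinAt
  have hf'c : ContinuousOn (deriv f) (Icc r R) := fun x hx =>
    (hf' x hx).continuousAt.continuousWithinAt
  have hA : IntegrableOn (fun x => (2 * q - 1) *
      (|deriv f x| ^ (2 * q - 2) * f x ^ (-(q * (α + 1)) + 1)) * deriv (deriv f) x) (Ioo r R) :=
    ((hf''.continuousOn_mul ((hf'c.abs_rpow_mul_rpow hfc hpos (by linarith) _).const_smul
      (2 * q - 1)) isCompact_Icc).mono_set Ioo_subset_Icc_self)
  have hE : IntegrableOn (energyDensity q α f) (Ioo r R) :=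
    (hf'c.abs_rpow_mul_rpow hfc hpos (by linarith) _).integrableOn_Icc.mono_set
      Ioo_subset_Icc_self
  have hFTC := intervalIntegral.integral_eq_sub_of_hasDerivAt
    (fun x hx => hasDerivAt_flux (α := α) hq (hf x (uIcc_of_le hrR ▸ hx))
      (hf' x (uIcc_of_le hrR ▸ hx)) (hpos x (uIcc_of_le hrR ▸ hx)))
    ((intervalIntegrable_iff_integrableOn_Ioo_of_le hrR).mpr (hA.sub (hE.const_mul _)))
  rw [intervalIntegral.integral_of_le hrR, integral_Ioc_eq_integral_Ioo,
    integral_sub hA (hE.const_mul _), integral_const_mul] at hFTC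
  rw [← hFTC]
  congr 1
  rw [← integral_const_mul (2 * q - 1 : ℝ)]
  refine setIntegral_congr_ae measurableSet_Ioo ?_
  filter_upwards [hode] with x hx hxI
  have hexp : f x ^ (-(q * (α + 1)) + 1) * f x ^ α = f x ^ ((α + 1) * (1 - q)) := by
    rw [← Real.rpow_add (hpos x (Ioo_subset_Icc_self hxI))]; ring_nf
  rw [hx hxI, fluxWeight]
  linear_combination (2 * q - 1) * |deriv f x| ^ (2 * q - 2) * g x * hexp

theorem abs_setIntegral_fluxWeight_mul_le (hq : 1 ≤ q) (hfc : ContinuousOn f (Icc r R))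
    (hf'c : ContinuousOn (deriv f) (Icc r R)) (hpos : ∀ x ∈ Icc r R, 0 < f x)
    (hg : IntegrableOn (fun x => |g x| ^ q) (Ioo r R)) :
    |∫ x in Ioo r R, fluxWeight q α f x * g x| ≤
      (∫ x in Ioo r R, energyDensity q α f x) ^ (1 - 1 / q) *
        (∫ x in Ioo r R, |g x| ^ q) ^ (1 / q) := by
  have hP₀ : ∀ x ∈ Ioo r R, 0 ≤ fluxWeight q α f x := fun x hx =>
    mul_nonneg (by positivity) (Real.rpow_nonneg (hpos x (Ioo_subset_Icc_self hx)).le _)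
  have habs : |∫ x in Ioo r R, fluxWeight q α f x * g x| ≤
      ∫ x in Ioo r R, fluxWeight q α f x * |g x| :=
    abs_integral_le_integral_abs.trans_eq <| setIntegral_congr_fun measurableSet_Ioo fun x hx => by
      rw [abs_mul, abs_of_nonneg (hP₀ x hx)]
  refine habs.trans ?_
  rcases hq.eq_or_lt with rfl | hq
  · norm_num [fluxWeight]
  have hpq := (Real.HolderConjugate.conjExponent hq).symm
  have hPc : ContinuousOn (fluxWeight q α f) (Icc r R) :=
    hf'c.abs_rpow_mul_rpow hfc hpos (by linarith) _
  have hPp : ∀ x ∈ Ioo r R, |fluxWeight q α f x| ^ q.conjExponent = energyDensity q α f x := by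
    intro x hx
    have hfx := hpos x (Ioo_subset_Icc_self hx)
    rw [abs_of_nonneg (hP₀ x hx), fluxWeight, energyDensity,
      Real.mul_rpow (by positivity) (by positivity), ← Real.rpow_mul (abs_nonneg _),
      ← Real.rpow_mul hfx.le, Real.conjExponent]
    congr 2
    · field_simp
    · field_simp; ring
  have hP : MemLp (fluxWeight q α f) (ENNReal.ofReal q.conjExponent) (volume.restrict (Ioo r R)) :=
    memLp_ofReal_of_integrable_abs_rpow hpq.pos
      ((hPc.mono Ioo_subset_Icc_self).aestronglyMeasurable measurableSet_Ioo)
      (((hf'c.abs_rpow_mul_rpow hfc hpos (by linarith) _).integrableOn_Icc.mono_set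
        Ioo_subset_Icc_self).congr_fun (fun x hx => (hPp x hx).symm) measurableSet_Ioo)
  -- `|g|` is measurable as the `q`-th root of the integrable `|g| ^ q`.
  have hgm : AEStronglyMeasurable (fun x => |g x|) (volume.restrict (Ioo r R)) :=
    (hg.aemeasurable.pow_const q⁻¹).aestronglyMeasurable.congr <| ae_of_all _ fun x =>
      Real.rpow_rpow_inv (abs_nonneg _) (by linarith)
  have hG : MemLp (fun x => |g x|) (ENNReal.ofReal q) (volume.restrict (Ioo r R)) :=
    memLp_ofReal_of_integrable_abs_rpow (by linarith) hgm (by simp only [abs_abs]; exact hg)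
  have hF : ∫ x in Ioo r R, fluxWeight q α f x ^ q.conjExponent =
      ∫ x in Ioo r R, energyDensity q α f x :=
    setIntegral_congr_fun measurableSet_Ioo fun x hx => by
      rw [← hPp x hx, abs_of_nonneg (hP₀ x hx)]
  calc _ ≤ _ := integral_mul_le_Lp_mul_Lq_of_nonneg hpq
        ((ae_restrict_mem measurableSet_Ioo).mono hP₀) (ae_of_all _ fun x => abs_nonneg (g x)) hP hG
    _ = _ := by rw [hF, one_div q.conjExponent, ← hpq.symm.one_sub_inv, one_div]

theorem abs_flux_sub_flux_add_le {S : Set ℝ} (hS : MeasurableSet S) (hq : 1 ≤ q)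
    (hrR : r ≤ R) (hsub : Icc r R ⊆ S) (hf : ∀ x ∈ S, DifferentiableAt ℝ f x)
    (hf' : ∀ x ∈ S, DifferentiableAt ℝ (deriv f) x) (hf'' : LocallyIntegrableOn (deriv (deriv f)) S)
    (hpos : ∀ x ∈ S, 0 < f x) (hode : ∀ᵐ x, x ∈ S → deriv (deriv f) x = g x * f x ^ α)
    (hg : IntegrableOn (fun x => |g x| ^ q) S) (hint : IntegrableOn (energyDensity q α f) S) :
    |flux q α f R - flux q α f r + (q - 1 + α * q) * ∫ x in Ioo r R, energyDensity q α f x| ≤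
      (2 * q - 1) * ((∫ x in S, energyDensity q α f x) ^ (1 - 1 / q) *
        (∫ x in S, |g x| ^ q) ^ (1 / q)) := by
  have hIoo : Ioo r R ⊆ S := Ioo_subset_Icc_self.trans hsub
  have hF₀ : ∀ x ∈ S, 0 ≤ energyDensity q α f x := fun x hx => energyDensity_nonneg (hpos x hx)
  have hq' : 0 ≤ 1 - 1 / q := by
    rw [sub_nonneg, div_le_one (by linarith)]; exact hq
  rw [flux_sub_flux hq hrR (fun x hx => hf x (hsub hx)) (fun x hx => hf' x (hsub hx))
    (hf''.integrableOn_compact_subset hsub isCompact_Icc) (fun x hx => hpos x (hsub hx))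
    (hode.mono fun x hx hxI => hx (hIoo hxI)), sub_add_cancel, abs_mul,
    abs_of_nonneg (by linarith : (0 : ℝ) ≤ 2 * q - 1)]
  grw [abs_setIntegral_fluxWeight_mul_le hq
    (fun x hx => (hf x (hsub hx)).continuousAt.continuousWithinAt)
    (fun x hx => (hf' x (hsub hx)).continuousAt.continuousWithinAt) (fun x hx => hpos x (hsub hx))
    (hg.mono_set hIoo)]
  · gcongr
    · linarith
    · exact Real.rpow_nonneg (setIntegral_nonneg hS hF₀) _
    · exact setIntegral_nonneg measurableSet_Ioo fun x hx => hF₀ x (hIoo hx)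
    · exact (ae_restrict_mem hS).mono hF₀
    · exact ae_of_all _ fun x => by positivity
  · linarith

end EmdenFowler

open EmdenFowler

theorem homogeneous_eigenvalue_gradient_estimate
    (q α : ℝ) (hq : 1 ≤ q) (hα : α ≠ -1 + 1 / q)
    (b : EReal) (hb : 0 < b)
    (g : ℝ → ℝ)
    (hg : IntegrableOn (fun x => |g x| ^ q) {x : ℝ | 0 < x ∧ (↑x : EReal) < b})
    (f : ℝ → ℝ)
    (hfd : ∀ x ∈ {x : ℝ | 0 < x ∧ (↑x : EReal) < b}, DifferentiableAt ℝ f x)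
    (hfd' : ∀ x ∈ {x : ℝ | 0 < x ∧ (↑x : EReal) < b}, DifferentiableAt ℝ (deriv f) x)
    (hf'' : LocallyIntegrableOn (deriv (deriv f)) {x : ℝ | 0 < x ∧ (↑x : EReal) < b})
    (hpos : ∀ x ∈ {x : ℝ | 0 < x ∧ (↑x : EReal) < b}, 0 < f x)
    (hode : ∀ᵐ x : ℝ, x ∈ {x : ℝ | 0 < x ∧ (↑x : EReal) < b} →
      deriv (deriv f) x = g x * f x ^ α)
    (hbdry :
      liminf
          (fun R => -(Real.sign (α + 1 - 1 / q)) * |deriv f R| ^ (2 * q - 2) * deriv f R *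
            f R ^ (-(q * (α + 1)) + 1))
          (Filter.comap (fun x : ℝ => (↑x : EReal)) (nhdsWithin b (Iio b))) -
        limsup
          (fun r => -(Real.sign (α + 1 - 1 / q)) * |deriv f r| ^ (2 * q - 2) * deriv f r *
            f r ^ (-(q * (α + 1)) + 1))
          (nhdsWithin 0 (Ioi 0))
        ≤ 0) :
    ∫ x in {x : ℝ | 0 < x ∧ (↑x : EReal) < b},
        |deriv f x| ^ (2 * q) * f x ^ (-(q * (α + 1))) ≤
      ((2 * q - 1) / |q - 1 + α * q|) ^ q *
        ∫ x in {x : ℝ | 0 < x ∧ (↑x : EReal) < b}, |g x| ^ q := by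
  have hq₀ : 0 < q := by linarith
  have hσc : Real.sign (α + 1 - 1 / q) * (q - 1 + α * q) = |q - 1 + α * q| := by
    rw [show q - 1 + α * q = q * (α + 1 - 1 / q) by field_simp; ring, mul_left_comm,
      Real.sign_mul_self_eq_abs, abs_mul, abs_of_pos hq₀]
  have hc : 0 < |q - 1 + α * q| := by
    refine abs_pos.mpr fun hc => hα ?_
    field_simp
    linarith
  have hS := (isOpen_setOf_lt_and_coe_lt 0 b).measurableSet
  have hG : 0 ≤ ∫ x in {x : ℝ | 0 < x ∧ (↑x : EReal) < b}, |g x| ^ q :=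
    setIntegral_nonneg hS fun _ _ => by positivity
  change ∫ x in {x : ℝ | 0 < x ∧ (↑x : EReal) < b}, energyDensity q α f x ≤ _
  -- A non-integrable left-hand side is `0` by convention.
  by_cases hint : IntegrableOn (energyDensity q α f) {x : ℝ | 0 < x ∧ (↑x : EReal) < b}
  swap
  · rw [integral_undef hint]
    exact mul_nonneg (Real.rpow_nonneg (div_nonneg (by linarith) hc.le) _) hG
  refine le_div_rpow_mul_of_mul_le_mul_rpow_mul_rpow hc (by linarith) hq₀
    (setIntegral_nonneg hS fun x hx => energyDensity_nonneg (hpos x hx)) hG ?_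
  refine mul_setIntegral_le_of_liminf_sub_limsup_nonpos (by simpa using hb) hc.le hint
    (fun x hx => energyDensity_nonneg (hpos x hx)) ?_ hbdry
  intro r R hr hrR hR
  calc _ = |Real.sign (α + 1 - 1 / q)| * |flux q α f R - flux q α f r +
        (q - 1 + α * q) * ∫ x in Ioo r R, energyDensity q α f x| := by
        rw [← abs_mul, ← abs_neg, ← hσc, flux, flux]; ring_nf
    _ ≤ 1 * _ := mul_le_mul (Real.abs_sign_le_one _) (abs_flux_sub_flux_add_le hS hq hrR
        (fun x hx => ⟨hr.trans_le hx.1, (EReal.coe_le_coe_iff.mpr hx.2).trans_lt hR⟩)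
        hfd hfd' hf'' hpos hode hg hint) (abs_nonneg _) zero_le_one
    _ = _ := one_mul _
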